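/- arXiv:2302.01977 — 2 statements merged into one kernel-verified Lean document; each statement's English description precedes it below -/
import Mathlib

section
/- Let A ∈ ℂ^{m×n} have singular value decomposition A = UΣV*, fix target rank r and oversampling p ≥ 0, set d = r+p, and let R^T ∈ ℝ^{n×d}. Partition Σ = diag(Σ₁, Σ₂) with Σ₁ the top r×r block, and set R₁ = V₁* R^T (r×d) and R₂ = V₂* R^T ((n−r)×d), where V = [V₁ V₂]. If R₁ has full row rank, then for Y = A R^T and P_Y the orthogonal projection onto the column space of Y, ‖(I − P_Y)A‖² ≤ ‖Σ₂‖² + ‖Σ₂ R₂ R₁†‖², where ‖·‖ is the spectral norm and R₁† is the Moore–Penrose pseudoinverse. -/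
/-!
Write `x = V (x₁, x₂)` along the split of the right singular vectors. Since `P` fixes the range
of the sketch `Y = A Rᵀ`, `(1 - P) A x = (1 - P) (A x - Y R₁† x₁)`, and because `R₁ R₁† = 1`
(full row rank) the residual `A x - Y R₁† x₁ = U (0, Σ₂ x₂ - Σ₂ R₂ R₁† x₁)` has no component along
the top `r` singular directions. As `1 - P` is a contraction and `U` an isometry,
`‖(1 - P) A x‖ ≤ ‖Σ₂‖ ‖x₂‖ + ‖Σ₂ R₂ R₁†‖ ‖x₁‖`, and Cauchy–Schwarz together with
`‖x₁‖² + ‖x₂‖² = ‖x‖²` gives the bound.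
-/

open Matrix

/-- Euclidean norm of a complex vector. -/
noncomputable def vnormC {α : Type*} [Fintype α] (x : α → ℂ) : ℝ :=
  Real.sqrt (∑ i, ‖x i‖ ^ 2)

/-- Spectral norm of a complex matrix. -/
noncomputable def specNormC {α β : Type*} [Fintype α] [Fintype β]
    (A : Matrix α β ℂ) : ℝ :=
  sSup {c : ℝ | ∃ x : β → ℂ, vnormC x = 1 ∧ c = vnormC (A.mulVec x)}

section Norms

variable {α β : Type*} [Fintype α] [Fintype β]

lemma vnormC_eq_norm (x : α → ℂ) : vnormC x = ‖WithLp.toLp 2 x‖ := by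
  rw [EuclideanSpace.norm_eq]; rfl

lemma vnormC_sum_elim (u : α → ℂ) (v : β → ℂ) :
    vnormC (Sum.elim u v) = √(vnormC u ^ 2 + vnormC v ^ 2) := by
  simp only [vnormC, Fintype.sum_sum_type, Sum.elim_inl, Sum.elim_inr]
  rw [Real.sq_sqrt (by positivity), Real.sq_sqrt (by positivity)]

lemma vnormC_sum_elim_zero (v : β → ℂ) : vnormC (Sum.elim (0 : α → ℂ) v) = vnormC v := by
  simp [vnormC, Fintype.sum_sum_type]

lemma vnormC_sub_le (x y : α → ℂ) : vnormC (x - y) ≤ vnormC x + vnormC y := by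
  simpa only [vnormC_eq_norm, WithLp.toLp_sub] using norm_sub_le _ _

lemma vnormC_mulVec_of_conjTranspose_mul_eq_one [DecidableEq β] {U : Matrix α β ℂ}
    (hU : Uᴴ * U = 1) (x : β → ℂ) : vnormC (U *ᵥ x) = vnormC x := by
  have h : inner ℂ (WithLp.toLp 2 (U *ᵥ x)) (WithLp.toLp 2 (U *ᵥ x)) =
      inner ℂ (WithLp.toLp 2 x) (WithLp.toLp 2 x) := by
    simp only [EuclideanSpace.inner_toLp_toLp, star_mulVec, dotProduct_comm (U *ᵥ x),
      ← dotProduct_mulVec, mulVec_mulVec, hU, one_mulVec, dotProduct_comm (star x)]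
  rw [vnormC_eq_norm, vnormC_eq_norm, norm_eq_sqrt_re_inner (𝕜 := ℂ),
    norm_eq_sqrt_re_inner (𝕜 := ℂ), h]

lemma IsStarProjection.vnormC_mulVec_le [DecidableEq α] {P : Matrix α α ℂ}
    (hP : IsStarProjection P) (x : α → ℂ) : vnormC (P *ᵥ x) ≤ vnormC x := by
  have hT := IsStarProjection.norm_le _ (hP.map (Matrix.toEuclideanCLM (n := α) (𝕜 := ℂ)))
  rw [vnormC_eq_norm, vnormC_eq_norm, ← Matrix.toEuclideanCLM_toLp]
  exact (ContinuousLinearMap.le_opNorm _ _).trans (mul_le_of_le_one_left (norm_nonneg _) hT)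

lemma specNormC_eq_opNorm [DecidableEq β] (M : Matrix α β ℂ) :
    specNormC M = ‖LinearMap.toContinuousLinearMap (Matrix.toEuclideanLin M)‖ := by
  rw [← ContinuousLinearMap.sSup_sphere_eq_norm, specNormC]
  congr 1
  ext c
  simp only [Set.mem_ofPred_eq, Set.mem_image, mem_sphere_iff_norm, sub_zero]
  constructor
  · rintro ⟨x, hx, rfl⟩
    exact ⟨WithLp.toLp 2 x, by rwa [← vnormC_eq_norm], by rw [vnormC_eq_norm]; rfl⟩
  · rintro ⟨x, hx, rfl⟩
    exact ⟨x.ofLp, by rwa [vnormC_eq_norm], by rw [vnormC_eq_norm]; rfl⟩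

lemma specNormC_nonneg (M : Matrix α β ℂ) : 0 ≤ specNormC M := by
  classical
  exact (specNormC_eq_opNorm M).symm ▸ norm_nonneg _

lemma vnormC_mulVec_le (M : Matrix α β ℂ) (x : β → ℂ) :
    vnormC (M *ᵥ x) ≤ specNormC M * vnormC x := by
  classical
  rw [specNormC_eq_opNorm, vnormC_eq_norm, vnormC_eq_norm]
  exact (LinearMap.toContinuousLinearMap (toEuclideanLin M)).le_opNorm (WithLp.toLp 2 x)

lemma specNormC_le_bound {M : Matrix α β ℂ} {B : ℝ} (hB : 0 ≤ B)
    (h : ∀ x, vnormC (M *ᵥ x) ≤ B * vnormC x) : specNormC M ≤ B := by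
  classical
  rw [specNormC_eq_opNorm]
  refine ContinuousLinearMap.opNorm_le_bound _ hB fun x => ?_
  rw [LinearMap.coe_toContinuousLinearMap', toLpLin_apply]
  simpa only [vnormC_eq_norm, WithLp.toLp_ofLp] using h x.ofLp

end Norms

lemma mul_add_mul_le_sqrt_mul_sqrt (a b u v : ℝ) :
    a * u + b * v ≤ √(a ^ 2 + b ^ 2) * √(u ^ 2 + v ^ 2) := by
  simpa [Fin.sum_univ_two] using Real.sum_mul_le_sqrt_mul_sqrt Finset.univ ![a, b] ![u, v]

theorem Matrix.mul_eq_one_of_mul_mul_self_of_rank_eq {K ι κ : Type*} [Field K] [Fintype ι]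
    [Fintype κ] [DecidableEq ι] {R : Matrix ι κ K} {G : Matrix κ ι K}
    (hrank : R.rank = Fintype.card ι) (hRGR : R * G * R = R) : R * G = 1 := by
  have hsurj : Function.Surjective R.mulVecLin := by
    rw [← LinearMap.range_eq_top]
    exact Submodule.eq_top_of_finrank_eq (by rw [Module.finrank_fintype_fun_eq_card]; exact hrank)
  refine Matrix.toLin'.injective (LinearMap.ext fun y => ?_)
  obtain ⟨x, rfl⟩ := hsurj y
  simp [Matrix.toLin'_apply, mulVec_mulVec, hRGR]

theorem IsIdempotentElem.one_sub_mulVec_eq_zero_of_mem_range {α R : Type*} [Fintype α]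
    [DecidableEq α] [CommRing R] {P : Matrix α α R} (hP : IsIdempotentElem P) {v : α → R}
    (hv : v ∈ LinearMap.range P.mulVecLin) : (1 - P) *ᵥ v = 0 := by
  obtain ⟨t, rfl⟩ := hv
  simp [mulVec_mulVec, hP.one_sub_mul_self]

theorem Matrix.conjTranspose_mul_eq_fromRows {n ι κ δ R : Type*} [Fintype n] [Star R] [Semiring R]
    (V : Matrix n (ι ⊕ κ) R) (X : Matrix n δ R) :
    Vᴴ * X = fromRows ((V.submatrix id Sum.inl)ᴴ * X) ((V.submatrix id Sum.inr)ᴴ * X) := by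
  ext (i | i) j <;> rfl

theorem Matrix.diagonal_mulVec_sum_elim {ι κ R : Type*} [Fintype ι] [Fintype κ] [DecidableEq ι]
    [DecidableEq κ] [NonUnitalNonAssocSemiring R] (d : ι ⊕ κ → R) (u : ι → R) (v : κ → R) :
    diagonal d *ᵥ Sum.elim u v =
      Sum.elim (diagonal (d ∘ Sum.inl) *ᵥ u) (diagonal (d ∘ Sum.inr) *ᵥ v) := by
  ext (i | i) <;> simp [mulVec_diagonal]

section RangeFinder

variable {μ ι κ δ : Type*} [Fintype ι] [Fintype κ] [Fintype δ] [DecidableEq ι] [DecidableEq κ]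
  {A U : Matrix μ (ι ⊕ κ) ℂ} {V : Matrix (ι ⊕ κ) (ι ⊕ κ) ℂ} {s : ι ⊕ κ → ℝ}
  {Ω : Matrix (ι ⊕ κ) δ ℂ} {R₁ : Matrix ι δ ℂ} {R₂ : Matrix κ δ ℂ} {G : Matrix δ ι ℂ}

theorem svd_mulVec_sub_sketch_eq (hV : Vᴴ * V = 1)
    (hA : A = U * diagonal (fun i => (s i : ℂ)) * Vᴴ)
    (hR₁ : R₁ = (V.submatrix id Sum.inl)ᴴ * Ω) (hR₂ : R₂ = (V.submatrix id Sum.inr)ᴴ * Ω)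
    (hG : R₁ * G = 1) (x₁ : ι → ℂ) (x₂ : κ → ℂ) :
    A *ᵥ (V *ᵥ Sum.elim x₁ x₂) - (A * Ω) *ᵥ (G *ᵥ x₁) =
      U *ᵥ Sum.elim 0 (diagonal (fun i => (s (Sum.inr i) : ℂ)) *ᵥ x₂ -
        (diagonal (fun i => (s (Sum.inr i) : ℂ)) * R₂ * G) *ᵥ x₁) := by
  have hAV : A * V = U * diagonal (fun i => (s i : ℂ)) := by
    rw [hA, Matrix.mul_assoc, hV, Matrix.mul_one]
  have hAΩ : A * Ω = U * diagonal (fun i => (s i : ℂ)) * fromRows R₁ R₂ := by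
    rw [hA, Matrix.mul_assoc _ Vᴴ, conjTranspose_mul_eq_fromRows, ← hR₁, ← hR₂]
  have hΩ : fromRows R₁ R₂ *ᵥ G *ᵥ x₁ = Sum.elim x₁ (R₂ *ᵥ G *ᵥ x₁) := by
    rw [fromRows_mulVec, mulVec_mulVec, hG, one_mulVec]
  rw [mulVec_mulVec, hAV, hAΩ]
  simp only [← mulVec_mulVec, hΩ, ← mulVec_sub]
  congr 1
  ext (i | i) <;> simp [mulVec_diagonal, mul_sub]

theorem specNormC_one_sub_mul_sq_le [Fintype μ] [DecidableEq μ] (hU : Uᴴ * U = 1)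
    (hV : Vᴴ * V = 1) (hA : A = U * diagonal (fun i => (s i : ℂ)) * Vᴴ)
    (hR₁ : R₁ = (V.submatrix id Sum.inl)ᴴ * Ω) (hR₂ : R₂ = (V.submatrix id Sum.inr)ᴴ * Ω)
    (hG : R₁ * G = 1) {P : Matrix μ μ ℂ} (hP : IsStarProjection P)
    (hPΩ : LinearMap.range (A * Ω).mulVecLin ≤ LinearMap.range P.mulVecLin) :
    specNormC ((1 - P) * A) ^ 2 ≤
      specNormC (diagonal (fun i => (s (Sum.inr i) : ℂ))) ^ 2 +
      specNormC (diagonal (fun i => (s (Sum.inr i) : ℂ)) * R₂ * G) ^ 2 := by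
  set S₂ := diagonal (fun i => (s (Sum.inr i) : ℂ))
  set a := specNormC S₂
  set b := specNormC (S₂ * R₂ * G)
  have hpointwise : ∀ x₁ x₂, vnormC (((1 - P) * A) *ᵥ (V *ᵥ Sum.elim x₁ x₂)) ≤
      a * vnormC x₂ + b * vnormC x₁ := fun x₁ x₂ => calc
    _ = vnormC ((1 - P) *ᵥ (A *ᵥ (V *ᵥ Sum.elim x₁ x₂) - (A * Ω) *ᵥ (G *ᵥ x₁))) := by
      have hsketch : (1 - P) *ᵥ ((A * Ω) *ᵥ (G *ᵥ x₁)) = 0 :=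
        hP.isIdempotentElem.one_sub_mulVec_eq_zero_of_mem_range (hPΩ ⟨_, rfl⟩)
      rw [mulVec_sub, hsketch, sub_zero, mulVec_mulVec _ (1 - P) A]
    _ ≤ vnormC (A *ᵥ (V *ᵥ Sum.elim x₁ x₂) - (A * Ω) *ᵥ (G *ᵥ x₁)) :=
      hP.one_sub.vnormC_mulVec_le _
    _ = vnormC (S₂ *ᵥ x₂ - (S₂ * R₂ * G) *ᵥ x₁) := by
      rw [svd_mulVec_sub_sketch_eq hV hA hR₁ hR₂ hG, vnormC_mulVec_of_conjTranspose_mul_eq_one hU,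
        vnormC_sum_elim_zero]
    _ ≤ a * vnormC x₂ + b * vnormC x₁ :=
      (vnormC_sub_le _ _).trans (add_le_add (vnormC_mulVec_le _ _) (vnormC_mulVec_le _ _))
  have hnorm : specNormC ((1 - P) * A) ≤ √(a ^ 2 + b ^ 2) := by
    refine specNormC_le_bound (Real.sqrt_nonneg _) fun x => ?_
    have hx : x = V *ᵥ Sum.elim ((Vᴴ *ᵥ x) ∘ Sum.inl) ((Vᴴ *ᵥ x) ∘ Sum.inr) := by
      rw [Sum.elim_comp_inl_inr, mulVec_mulVec, mul_eq_one_comm.mp hV, one_mulVec]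
    rw [hx, vnormC_mulVec_of_conjTranspose_mul_eq_one hV, vnormC_sum_elim, add_comm (vnormC _ ^ 2)]
    exact (hpointwise _ _).trans (mul_add_mul_le_sqrt_mul_sqrt _ _ _ _)
  calc specNormC ((1 - P) * A) ^ 2 ≤ √(a ^ 2 + b ^ 2) ^ 2 :=
        pow_le_pow_left₀ (specNormC_nonneg _) hnorm 2
    _ = a ^ 2 + b ^ 2 := Real.sq_sqrt (by positivity)

end RangeFinder

/-- The `n = r + k` columns are indexed by `Fin r ⊕ Fin k`, separating the top `r` singular
directions from the rest; `d = r + p` is the sketch dimension. -/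
theorem stmt3_general {m r k p : ℕ}
    (A U : Matrix (Fin m) (Fin r ⊕ Fin k) ℂ)
    (V : Matrix (Fin r ⊕ Fin k) (Fin r ⊕ Fin k) ℂ)
    (s : Fin r ⊕ Fin k → ℝ)
    -- `U` has orthonormal columns and `V` is unitary:
    (hU : Uᴴ * U = 1) (hV : Vᴴ * V = 1)
    -- the SVD `A = U Σ V*`:
    (hA : A = U * Matrix.diagonal (fun i => (s i : ℂ)) * Vᴴ)
    -- the real test matrix `Rᵀ ∈ ℝ^{n × d}` (given as `R ∈ ℝ^{d × n}`):
    (R : Matrix (Fin (r + p)) (Fin r ⊕ Fin k) ℝ)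
    -- `R₁ = V₁* Rᵀ` and `R₂ = V₂* Rᵀ`:
    (R₁ : Matrix (Fin r) (Fin (r + p)) ℂ)
    (hR₁ : R₁ = (V.submatrix id Sum.inl)ᴴ * (Rᵀ.map (fun a => (a : ℂ))))
    (R₂ : Matrix (Fin k) (Fin (r + p)) ℂ)
    (hR₂ : R₂ = (V.submatrix id Sum.inr)ᴴ * (Rᵀ.map (fun a => (a : ℂ))))
    -- `R₁` has full row rank:
    (hrank : R₁.rank = r)
    -- the sketch `Y = A Rᵀ`:
    (Y : Matrix (Fin m) (Fin (r + p)) ℂ)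
    (hY : Y = A * (Rᵀ.map (fun a => (a : ℂ))))
    -- `P` is the orthogonal projector onto the column space of `Y`:
    (P : Matrix (Fin m) (Fin m) ℂ)
    (hP1 : P.IsHermitian) (hP2 : P * P = P)
    (hP3 : LinearMap.range P.mulVecLin = LinearMap.range Y.mulVecLin)
    -- `Rdag` is the Moore–Penrose pseudoinverse of `R₁`:
    (Rdag : Matrix (Fin (r + p)) (Fin r) ℂ)
    (hmp1 : R₁ * Rdag * R₁ = R₁) :
    specNormC ((1 - P) * A) ^ 2 ≤
      specNormC (Matrix.diagonal (fun i : Fin k => (s (Sum.inr i) : ℂ))) ^ 2 +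
      specNormC (Matrix.diagonal (fun i : Fin k => (s (Sum.inr i) : ℂ)) * R₂ * Rdag) ^ 2 := by
  have hG : R₁ * Rdag = 1 :=
    mul_eq_one_of_mul_mul_self_of_rank_eq (by rw [hrank, Fintype.card_fin]) hmp1
  exact specNormC_one_sub_mul_sq_le hU hV hA hR₁ hR₂ hG ⟨hP2, hP1.isSelfAdjoint⟩ (hY ▸ hP3.ge)

/-- Deterministic range-finder bound (Theorem 9.1 of Halko–Martinsson–Tropp).
The matrix has `n = r + k` columns, indexed by `Fin r ⊕ Fin k` so that the
partition into the top `r` singular directions and the rest is explicit;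
`d = r + p` is the sketch dimension. -/
theorem stmt3 {m r k p : ℕ}
    (A U : Matrix (Fin m) (Fin r ⊕ Fin k) ℂ)
    (V : Matrix (Fin r ⊕ Fin k) (Fin r ⊕ Fin k) ℂ)
    (s : Fin r ⊕ Fin k → ℝ)
    -- `U` has orthonormal columns and `V` is unitary:
    (hU : Uᴴ * U = 1) (hV : Vᴴ * V = 1)
    -- singular values are nonnegative and nonincreasing:
    (hs0 : ∀ i, 0 ≤ s i)
    (hsmono : ∀ i j : Fin (r + k), i ≤ j →
      s (finSumFinEquiv.symm j) ≤ s (finSumFinEquiv.symm i))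
    -- the SVD `A = U Σ V*`:
    (hA : A = U * Matrix.diagonal (fun i => (s i : ℂ)) * Vᴴ)
    -- the real test matrix `Rᵀ ∈ ℝ^{n × d}` (given as `R ∈ ℝ^{d × n}`):
    (R : Matrix (Fin (r + p)) (Fin r ⊕ Fin k) ℝ)
    -- `R₁ = V₁* Rᵀ` and `R₂ = V₂* Rᵀ`:
    (R₁ : Matrix (Fin r) (Fin (r + p)) ℂ)
    (hR₁ : R₁ = (V.submatrix id Sum.inl)ᴴ * (Rᵀ.map (fun a => (a : ℂ))))
    (R₂ : Matrix (Fin k) (Fin (r + p)) ℂ)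
    (hR₂ : R₂ = (V.submatrix id Sum.inr)ᴴ * (Rᵀ.map (fun a => (a : ℂ))))
    -- `R₁` has full row rank:
    (hrank : R₁.rank = r)
    -- the sketch `Y = A Rᵀ`:
    (Y : Matrix (Fin m) (Fin (r + p)) ℂ)
    (hY : Y = A * (Rᵀ.map (fun a => (a : ℂ))))
    -- `P` is the orthogonal projector onto the column space of `Y`:
    (P : Matrix (Fin m) (Fin m) ℂ)
    (hP1 : P.IsHermitian) (hP2 : P * P = P)
    (hP3 : LinearMap.range P.mulVecLin = LinearMap.range Y.mulVecLin)
    -- `Rdag` is the Moore–Penrose pseudoinverse of `R₁`: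
    (Rdag : Matrix (Fin (r + p)) (Fin r) ℂ)
    (hmp1 : R₁ * Rdag * R₁ = R₁) (hmp2 : Rdag * R₁ * Rdag = Rdag)
    (hmp3 : (R₁ * Rdag)ᴴ = R₁ * Rdag) (hmp4 : (Rdag * R₁)ᴴ = Rdag * R₁) :
    specNormC ((1 - P) * A) ^ 2 ≤
      specNormC (Matrix.diagonal (fun i : Fin k => (s (Sum.inr i) : ℂ))) ^ 2 +
      specNormC (Matrix.diagonal (fun i : Fin k => (s (Sum.inr i) : ℂ)) * R₂ * Rdag) ^ 2 :=
  stmt3_general A U V s hU hV hA R R₁ hR₁ R₂ hR₂ hrank Y hY P hP1 hP2 hP3 Rdag hmp1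
end

section
/- Let S be the unit sphere of an r-dimensional subspace W of ℝ^n, and let N be a (1/2)-net of S with |N| = N. Suppose a linear map R: ℝ^n → ℝ^d satisfies |⟨Rx, Ry⟩ − ⟨x, y⟩| ≤ ε/4 for all x, y ∈ N. Then for every y ∈ S, |‖Ry‖² − ‖y‖²| ≤ ε. -/
/-- Euclidean norm of a real vector. -/
noncomputable def vnorm {n : ℕ} (x : Fin n → ℝ) : ℝ := Real.sqrt (∑ i, x i ^ 2)

/-- Standard inner product on `ℝ^n`. -/
noncomputable def dotp {n : ℕ} (x y : Fin n → ℝ) : ℝ := ∑ i, x i * y i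

lemma vnorm_nonneg' {n : ℕ} (x : Fin n → ℝ) : 0 ≤ vnorm x := Real.sqrt_nonneg _

lemma vnorm_sq_eq {n : ℕ} (x : Fin n → ℝ) : vnorm x ^ 2 = dotp x x := by
  rw [vnorm, Real.sq_sqrt (by positivity)]
  simp [dotp, sq]

lemma abs_dotp_le {n : ℕ} (x y : Fin n → ℝ) : |dotp x y| ≤ vnorm x * vnorm y := by
  have h := Finset.sum_mul_sq_le_sq_mul_sq Finset.univ x y
  have h1 : |dotp x y| = Real.sqrt ((dotp x y) ^ 2) := (Real.sqrt_sq_eq_abs _).symm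
  rw [h1, vnorm, vnorm, ← Real.sqrt_mul (by positivity)]
  exact Real.sqrt_le_sqrt h

lemma vnorm_smul' {n : ℕ} (c : ℝ) (x : Fin n → ℝ) : vnorm (c • x) = |c| * vnorm x := by
  simp only [vnorm, Pi.smul_apply, smul_eq_mul, mul_pow, ← Finset.mul_sum]
  rw [Real.sqrt_mul (sq_nonneg c), Real.sqrt_sq_eq_abs]

lemma vnorm_eq_zero' {n : ℕ} {x : Fin n → ℝ} (h : vnorm x = 0) : x = 0 := by
  have hs : ∑ i, x i ^ 2 = 0 := by
    have h2 := Real.sqrt_eq_zero'.mp h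
    have h3 : (0:ℝ) ≤ ∑ i, x i ^ 2 := Finset.sum_nonneg fun i _ => sq_nonneg (x i)
    linarith
  funext i
  have := (Finset.sum_eq_zero_iff_of_nonneg (fun i _ => sq_nonneg (x i))).mp hs i
    (Finset.mem_univ i)
  exact pow_eq_zero_iff (two_ne_zero) |>.mp this

lemma abs_apply_le_vnorm {n : ℕ} (x : Fin n → ℝ) (i : Fin n) : |x i| ≤ vnorm x := by
  rw [← Real.sqrt_sq_eq_abs]
  exact Real.sqrt_le_sqrt (Finset.single_le_sum (fun j _ => sq_nonneg (x j))
    (Finset.mem_univ i))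

lemma dotp_comm' {n : ℕ} (x y : Fin n → ℝ) : dotp x y = dotp y x := by
  simp [dotp, mul_comm]

lemma dotp_sub_left {n : ℕ} (x y z : Fin n → ℝ) :
    dotp (x - y) z = dotp x z - dotp y z := by
  simp [dotp, sub_mul, Finset.sum_sub_distrib]

lemma dotp_smul_left {n : ℕ} (c : ℝ) (x z : Fin n → ℝ) :
    dotp (c • x) z = c * dotp x z := by
  simp [dotp, Finset.mul_sum, mul_assoc]

theorem stmt11 {n d r : ℕ}
    (W : Submodule ℝ (Fin n → ℝ)) (hW : Module.finrank ℝ W = r)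
    -- `S` is the unit sphere of `W`:
    (S : Set (Fin n → ℝ)) (hS : S = {y | y ∈ W ∧ vnorm y = 1})
    -- `N` is a (1/2)-net of `S`:
    (N : Finset (Fin n → ℝ)) (hNS : ↑N ⊆ S)
    (hnet : ∀ y ∈ S, ∃ z ∈ N, vnorm (y - z) ≤ 1 / 2)
    (R : Matrix (Fin d) (Fin n) ℝ) (ε : ℝ) (hε : 0 < ε)
    (hip : ∀ x ∈ N, ∀ y ∈ N,
      |dotp (R.mulVec x) (R.mulVec y) - dotp x y| ≤ ε / 4) :
    ∀ y ∈ S, |vnorm (R.mulVec y) ^ 2 - vnorm y ^ 2| ≤ ε := by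
  intro y hy
  classical
  -- The bilinear error form.
  set B : (Fin n → ℝ) → (Fin n → ℝ) → ℝ :=
    fun u v => dotp (R.mulVec u) (R.mulVec v) - dotp u v with hBdef
  have hB_symm : ∀ u v, B u v = B v u := by
    intro u v; simp only [hBdef]; rw [dotp_comm' u v, dotp_comm' (R.mulVec u)]
  have hB_sub_left : ∀ u z v, B (u - z) v = B u v - B z v := by
    intro u z v
    simp only [hBdef, Matrix.mulVec_sub, dotp_sub_left]
    ring
  have hB_smul_left : ∀ (c : ℝ) u v, B (c • u) v = c * B u v := by
    intro c u v
    simp only [hBdef, dotp_smul_left]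
    rw [show R.mulVec (c • u) = c • R.mulVec u from Matrix.mulVec_smul R c u,
      dotp_smul_left]
    ring
  -- Members of S are unit vectors of W.
  have hSmem : ∀ u ∈ S, u ∈ W ∧ vnorm u = 1 := by
    intro u hu; rw [hS] at hu; exact hu
  -- A uniform bound on |B u v| for u, v ∈ S.
  set K : ℝ := Real.sqrt (∑ i, (∑ j, |R i j|) ^ 2) with hKdef
  have hRu_bound : ∀ u ∈ S, vnorm (R.mulVec u) ≤ K := by
    intro u hu
    apply Real.sqrt_le_sqrt
    apply Finset.sum_le_sum
    intro i _
    have habs : |R.mulVec u i| ≤ ∑ j, |R i j| := by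
      calc |R.mulVec u i| = |∑ j, R i j * u j| := rfl
        _ ≤ ∑ j, |R i j * u j| := Finset.abs_sum_le_sum_abs _ _
        _ ≤ ∑ j, |R i j| := by
            apply Finset.sum_le_sum
            intro j _
            rw [abs_mul]
            have h1 : |u j| ≤ 1 := by
              have := abs_apply_le_vnorm u j
              rw [(hSmem u hu).2] at this; exact this
            nlinarith [abs_nonneg (R i j)]
    calc (R.mulVec u i) ^ 2 = |R.mulVec u i| ^ 2 := (sq_abs _).symm
      _ ≤ (∑ j, |R i j|) ^ 2 := by
          apply pow_le_pow_left₀ (abs_nonneg _) habs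
  have hCbound : ∀ u ∈ S, ∀ v ∈ S, |B u v| ≤ K * K + 1 := by
    intro u hu v hv
    have h1 : |dotp (R.mulVec u) (R.mulVec v)| ≤ K * K := by
      calc |dotp (R.mulVec u) (R.mulVec v)|
          ≤ vnorm (R.mulVec u) * vnorm (R.mulVec v) := abs_dotp_le _ _
        _ ≤ K * K := by
            apply mul_le_mul (hRu_bound u hu) (hRu_bound v hv) (vnorm_nonneg' _)
            exact le_trans (vnorm_nonneg' _) (hRu_bound u hu)
    have h2 : |dotp u v| ≤ 1 := by
      have := abs_dotp_le u v
      rw [(hSmem u hu).2, (hSmem v hv).2] at this; simpa using this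
    calc |B u v| ≤ |dotp (R.mulVec u) (R.mulVec v)| + |dotp u v| := abs_sub _ _
      _ ≤ K * K + 1 := add_le_add h1 h2
  -- The two sup sets.
  set Tb : Set ℝ := {t | ∃ z ∈ N, ∃ v ∈ S, t = |B z v|} with hTbdef
  set TM : Set ℝ := {t | ∃ u ∈ S, ∃ v ∈ S, t = |B u v|} with hTMdef
  -- Pick a net point near y to witness nonemptiness.
  obtain ⟨z₀, hz₀N, _⟩ := hnet y hy
  have hz₀S : z₀ ∈ S := hNS hz₀N
  have hTb_ne : Tb.Nonempty := ⟨|B z₀ y|, z₀, hz₀N, y, hy, rfl⟩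
  have hTM_ne : TM.Nonempty := ⟨|B y y|, y, hy, y, hy, rfl⟩
  have hTb_bdd : BddAbove Tb := by
    refine ⟨K * K + 1, ?_⟩
    rintro t ⟨z, hz, v, hv, rfl⟩
    exact hCbound z (hNS hz) v hv
  have hTM_bdd : BddAbove TM := by
    refine ⟨K * K + 1, ?_⟩
    rintro t ⟨u, hu, v, hv, rfl⟩
    exact hCbound u hu v hv
  set b : ℝ := sSup Tb with hbdef
  set M : ℝ := sSup TM with hMdef
  have hb_nonneg : 0 ≤ b :=
    le_trans (abs_nonneg (B z₀ y)) (le_csSup hTb_bdd ⟨z₀, hz₀N, y, hy, rfl⟩)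
  have hM_nonneg : 0 ≤ M :=
    le_trans (abs_nonneg (B y y)) (le_csSup hTM_bdd ⟨y, hy, y, hy, rfl⟩)
  -- Decomposition lemma: any v ∈ S is z' + t • u' with z' ∈ N, u' ∈ S, 0 ≤ t ≤ 1/2,
  -- or v ∈ N up to v = z'.
  have hdecomp : ∀ v ∈ S, ∃ z' ∈ N, (v = z') ∨
      ∃ t : ℝ, ∃ u' ∈ S, 0 < t ∧ t ≤ 1/2 ∧ v - z' = t • u' := by
    intro v hv
    obtain ⟨z', hz'N, hz'near⟩ := hnet v hv
    refine ⟨z', hz'N, ?_⟩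
    by_cases hveq : vnorm (v - z') = 0
    · left
      have := vnorm_eq_zero' hveq
      have : v - z' = 0 := this
      linear_combination (norm := abel1) this
    · right
      set t : ℝ := vnorm (v - z') with htdef
      have ht_pos : 0 < t := lt_of_le_of_ne (vnorm_nonneg' _) (Ne.symm hveq)
      refine ⟨t, t⁻¹ • (v - z'), ?_, ht_pos, hz'near, ?_⟩
      · rw [hS]
        constructor
        · have hvW := (hSmem v hv).1
          have hz'W := (hSmem z' (hNS hz'N)).1
          exact Submodule.smul_mem _ _ (Submodule.sub_mem _ hvW hz'W)
        · rw [vnorm_smul', abs_inv, abs_of_pos ht_pos, ← htdef]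
          field_simp
      · rw [smul_smul, mul_inv_cancel₀ (ne_of_gt ht_pos), one_smul]
  -- Key bound 1: for z ∈ N, v ∈ S, |B z v| ≤ ε/4 + b/2.
  have hkey1 : ∀ z ∈ N, ∀ v ∈ S, |B z v| ≤ ε / 4 + b / 2 := by
    intro z hz v hv
    obtain ⟨z', hz'N, hcase⟩ := hdecomp v hv
    rcases hcase with heq | ⟨t, u', hu'S, htpos, htle, hwt⟩
    · subst heq
      calc |B z v| ≤ ε / 4 := hip z hz v hz'N
        _ ≤ ε / 4 + b / 2 := by linarith
    · have hBv : B z v = B z z' + t * B z u' := by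
        have h1 : B (v - z') z = B v z - B z' z := hB_sub_left v z' z
        have h2 : B (v - z') z = t * B u' z := by rw [hwt, hB_smul_left]
        have h3 : B v z = B z' z + t * B u' z := by linarith
        rw [hB_symm z v, h3, hB_symm z' z, hB_symm u' z]
      rw [hBv]
      have h4 : |B z z'| ≤ ε / 4 := hip z hz z' hz'N
      have h5 : |B z u'| ≤ b := le_csSup hTb_bdd ⟨z, hz, u', hu'S, rfl⟩
      calc |B z z' + t * B z u'| ≤ |B z z'| + |t * B z u'| := abs_add_le _ _
        _ = |B z z'| + t * |B z u'| := by rw [abs_mul, abs_of_pos htpos]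
        _ ≤ ε / 4 + (1/2) * b := by
            have : t * |B z u'| ≤ (1/2) * b := by
              apply mul_le_mul htle h5 (abs_nonneg _) (by norm_num)
            linarith
        _ = ε / 4 + b / 2 := by ring
  have hb_le : b ≤ ε / 2 := by
    have : b ≤ ε / 4 + b / 2 := by
      apply csSup_le hTb_ne
      rintro t ⟨z, hz, v, hv, rfl⟩
      exact hkey1 z hz v hv
    linarith
  -- Key bound 2: for u, v ∈ S, |B u v| ≤ b + M/2.
  have hkey2 : ∀ u ∈ S, ∀ v ∈ S, |B u v| ≤ b + M / 2 := by
    intro u hu v hv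
    obtain ⟨z', hz'N, hcase⟩ := hdecomp u hu
    rcases hcase with heq | ⟨t, u', hu'S, htpos, htle, hwt⟩
    · subst heq
      calc |B u v| ≤ b := le_csSup hTb_bdd ⟨u, hz'N, v, hv, rfl⟩
        _ ≤ b + M / 2 := by linarith
    · have hBu : B u v = B z' v + t * B u' v := by
        have h1 : B (u - z') v = B u v - B z' v := hB_sub_left u z' v
        have h2 : B (u - z') v = t * B u' v := by rw [hwt, hB_smul_left]
        linarith
      rw [hBu]
      have h4 : |B z' v| ≤ b := le_csSup hTb_bdd ⟨z', hz'N, v, hv, rfl⟩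
      have h5 : |B u' v| ≤ M := le_csSup hTM_bdd ⟨u', hu'S, v, hv, rfl⟩
      calc |B z' v + t * B u' v| ≤ |B z' v| + |t * B u' v| := abs_add_le _ _
        _ = |B z' v| + t * |B u' v| := by rw [abs_mul, abs_of_pos htpos]
        _ ≤ b + (1/2) * M := by
            have : t * |B u' v| ≤ (1/2) * M := by
              apply mul_le_mul htle h5 (abs_nonneg _) (by norm_num)
            linarith
        _ = b + M / 2 := by ring
  have hM_le : M ≤ ε := by
    have h1 : M ≤ b + M / 2 := by
      apply csSup_le hTM_ne
      rintro t ⟨u, hu, v, hv, rfl⟩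
      exact hkey2 u hu v hv
    linarith
  have hfinal : |B y y| ≤ M := le_csSup hTM_bdd ⟨y, hy, y, hy, rfl⟩
  have hgoal : vnorm (R.mulVec y) ^ 2 - vnorm y ^ 2 = B y y := by
    simp only [hBdef]
    rw [vnorm_sq_eq, vnorm_sq_eq]
  rw [hgoal]
  linarith
end
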